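/- arXiv:1108.2181 — 2 statements merged into one kernel-verified Lean document; each statement's English description precedes it below -/
import Mathlib

section
/- There is no algebra morphism L from the algebra of bounded real-valued functions on (0,∞) to ℝ satisfying liminf_{x→0} f(x) ≤ L(f) ≤ limsup_{x→0} f(x) for all bounded f, and additionally satisfying L(f∘g) = L(f) for every bounded f and every g : (0,∞)→(0,∞) with limit 0 at 0. -/
open Filter Set

/-- `f` is bounded on `(0,∞)`. -/
def BddOn (f : ℝ → ℝ) : Prop := ∃ M, ∀ x ∈ Set.Ioi (0:ℝ), |f x| ≤ M

/-- A limit notion at `0` on the algebra of bounded functions on `(0,∞)`: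
an algebra morphism to `ℝ`, monotone, lying between `liminf` and `limsup` at `0⁺`. -/
def IsLimitNotion (L : (ℝ → ℝ) → ℝ) : Prop :=
  (∀ f g, BddOn f → BddOn g → L (f + g) = L f + L g) ∧
  (∀ f g, BddOn f → BddOn g → L (f * g) = L f * L g) ∧
  (∀ c : ℝ, L (fun _ => c) = c) ∧
  (∀ f g, BddOn f → BddOn g → (∀ x ∈ Set.Ioi (0:ℝ), f x ≤ g x) → L f ≤ L g) ∧
  (∀ f, BddOn f →
    Filter.liminf f (nhdsWithin 0 (Set.Ioi 0)) ≤ L f ∧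
    L f ≤ Filter.limsup f (nhdsWithin 0 (Set.Ioi 0)))

/-!
The map `g x = x / (1 + π x)` satisfies `1 / g x = 1 / x + π`, so precomposition
with `g` negates both `cos (1/x)` and `sin (1/x)`. An invariant limit notion `L` therefore sends
both to `0`, and multiplicativity gives `L 1 = L (cos² (1/x) + sin² (1/x)) = 0² + 0² = 0`, contradicting `L 1 = 1`.
-/

open Function Real Topology

def IsCompInvariant (L : (ℝ → ℝ) → ℝ) : Prop :=
  ∀ f, BddOn f → ∀ g : ℝ → ℝ, MapsTo g (Ioi 0) (Ioi 0) → Tendsto g (𝓝[>] 0) (𝓝 0) →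
    L (f ∘ g) = L f

namespace BddOn

variable {f g : ℝ → ℝ}

theorem of_abs_le_one (h : ∀ x, |f x| ≤ 1) : BddOn f := ⟨1, fun x _ => h x⟩

theorem neg (hf : BddOn f) : BddOn (-f) := by
  obtain ⟨M, hM⟩ := hf
  exact ⟨M, fun x hx => by simpa using hM x hx⟩

theorem mul (hf : BddOn f) (hg : BddOn g) : BddOn (f * g) := by
  obtain ⟨M, hM⟩ := hf
  obtain ⟨N, hN⟩ := hg
  refine ⟨M * N, fun x hx => ?_⟩
  rw [Pi.mul_apply, abs_mul]
  exact mul_le_mul (hM x hx) (hN x hx) (abs_nonneg _) ((abs_nonneg _).trans (hM x hx))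

theorem comp (hf : BddOn f) (hg : MapsTo g (Ioi 0) (Ioi 0)) : BddOn (f ∘ g) := by
  obtain ⟨M, hM⟩ := hf
  exact ⟨M, fun x hx => hM (g x) (hg hx)⟩

end BddOn

namespace IsLimitNotion

variable {L : (ℝ → ℝ) → ℝ} (hL : IsLimitNotion L) {f g : ℝ → ℝ}
include hL

theorem map_add (hf : BddOn f) (hg : BddOn g) : L (f + g) = L f + L g := hL.1 f g hf hg

theorem map_mul (hf : BddOn f) (hg : BddOn g) : L (f * g) = L f * L g := hL.2.1 f g hf hg

theorem map_const (c : ℝ) : L (fun _ => c) = c := hL.2.2.1 c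

theorem congr_on (hf : BddOn f) (hg : BddOn g) (h : EqOn f g (Ioi 0)) : L f = L g :=
  le_antisymm (hL.2.2.2.1 f g hf hg fun _ hx => (h hx).le)
    (hL.2.2.2.1 g f hg hf fun _ hx => (h hx).ge)

theorem map_neg (hf : BddOn f) : L (-f) = -L f := by
  have h : L (f + -f) = 0 := by rw [add_neg_cancel]; exact hL.map_const 0
  rw [hL.map_add hf hf.neg] at h
  linarith

theorem eq_zero_of_comp_eq_neg (hinv : IsCompInvariant L) (hf : BddOn f)
    (hg_maps : MapsTo g (Ioi 0) (Ioi 0)) (hg_lim : Tendsto g (𝓝[>] 0) (𝓝 0))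
    (h : EqOn (f ∘ g) (-f) (Ioi 0)) : L f = 0 := by
  have h_neg : L f = -L f := by
    rw [← hL.map_neg hf, ← hinv f hf g hg_maps hg_lim]
    exact hL.congr_on (hf.comp hg_maps) hf.neg h
  linarith

end IsLimitNotion

noncomputable def recipShift (c x : ℝ) : ℝ := x / (1 + c * x)

theorem recipShift_mapsTo {c : ℝ} (hc : 0 ≤ c) : MapsTo (recipShift c) (Ioi 0) (Ioi 0) :=
  fun x (hx : 0 < x) => div_pos hx (by positivity)

theorem tendsto_recipShift (c : ℝ) : Tendsto (recipShift c) (𝓝[>] 0) (𝓝 0) := by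
  have h : ContinuousAt (recipShift c) 0 :=
    continuousAt_id.div (by fun_prop) (by simp)
  simpa [recipShift] using h.tendsto.mono_left nhdsWithin_le_nhds

theorem inv_recipShift {c x : ℝ} (hc : 0 ≤ c) (hx : 0 < x) : (recipShift c x)⁻¹ = x⁻¹ + c := by
  have : 0 < 1 + c * x := by positivity
  rw [recipShift, inv_div]
  field_simp

theorem Function.Antiperiodic.comp_inv_recipShift {φ : ℝ → ℝ} {c : ℝ} (hφ : Antiperiodic φ c)
    (hc : 0 ≤ c) : EqOn ((fun x => φ x⁻¹) ∘ recipShift c) (-fun x => φ x⁻¹) (Ioi 0) :=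
  fun x (hx : 0 < x) => by simp only [comp_apply, Pi.neg_apply, inv_recipShift hc hx, hφ x⁻¹]

theorem IsLimitNotion.map_inv_eq_zero_of_antiperiodic {L : (ℝ → ℝ) → ℝ} (hL : IsLimitNotion L)
    (hinv : IsCompInvariant L) {φ : ℝ → ℝ} {c : ℝ} (hφ : Antiperiodic φ c) (hc : 0 ≤ c)
    (hbdd : BddOn fun x => φ x⁻¹) : L (fun x => φ x⁻¹) = 0 :=
  hL.eq_zero_of_comp_eq_neg hinv hbdd (recipShift_mapsTo hc) (tendsto_recipShift c)
    (hφ.comp_inv_recipShift hc)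

/-- There is no limit notion at `0` that is moreover invariant under precomposition
by every map `(0,∞) → (0,∞)` tending to `0` at `0`. -/
theorem no_composition_invariant_limit_notion :
    ¬ ∃ L : (ℝ → ℝ) → ℝ, IsLimitNotion L ∧
      ∀ f, BddOn f → ∀ g : ℝ → ℝ, (∀ x ∈ Set.Ioi (0:ℝ), g x ∈ Set.Ioi (0:ℝ)) →
        Filter.Tendsto g (nhdsWithin 0 (Set.Ioi 0)) (nhds 0) →
        L (f ∘ g) = L f := by
  rintro ⟨L, hL, hinv⟩
  set u : ℝ → ℝ := fun x => cos x⁻¹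
  set v : ℝ → ℝ := fun x => sin x⁻¹
  have hu : BddOn u := .of_abs_le_one fun x => abs_cos_le_one x⁻¹
  have hv : BddOn v := .of_abs_le_one fun x => abs_sin_le_one x⁻¹
  have hu0 : L u = 0 := hL.map_inv_eq_zero_of_antiperiodic hinv cos_antiperiodic pi_pos.le hu
  have hv0 : L v = 0 := hL.map_inv_eq_zero_of_antiperiodic hinv sin_antiperiodic pi_pos.le hv
  have h_one : u * u + v * v = fun _ => 1 := by
    funext x
    simp only [Pi.add_apply, Pi.mul_apply, u, v]
    linear_combination cos_sq_add_sin_sq x⁻¹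
  have := calc
    (1 : ℝ) = L (u * u + v * v) := by rw [h_one, hL.map_const]
    _ = L u * L u + L v * L v := by
      rw [hL.map_add (hu.mul hu) (hv.mul hv), hL.map_mul hu hu, hL.map_mul hv hv]
    _ = 0 := by rw [hu0, hv0]; ring
  exact one_ne_zero this
end

section
/- Let M be a compact (or pre-compact) metric space and P ≠ 0, P' two finite uniform Borel measures on M, where uniform means: there is an increasing sequence of open sets M_n with union M and radii r_n > 0 such that for all x, y ∈ M_n and all 0 < r < r_n, the measure of B(x,r) equals the measure of B(y,r). Then there exists l ∈ ℝ with P' = l·P; in particular any two uniform Borel probability measures on M coincide. -/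
/-!
Fubini applied to `{(x, y) | dist x y < r}` gives `∫ ν(B(x, r)) dμ(x) = ∫ μ(B(y, r)) dν(y)`.
If all `r`-balls have `μ`-measure `a` and `ν`-measure `b`, and the `r`-balls around a closed
set `F` lie in an open set `U`, restricting `ν` to `U` turns this into `b μ(F) ≤ a ν(U)`; taking
`F = U = M` as well and cancelling `a ≠ 0` gives `ν(F) μ(M) ≤ ν(M) μ(U)`. On a compact space such
a radius exists for every `F ⊆ U`, so inner regularity and symmetry give
`μ(M) ν(U) = ν(M) μ(U)` for all open `U`, and open sets determine finite Borel measures.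
-/

open MeasureTheory

/-- A Borel measure is uniform if there is an increasing sequence of open sets `Mₙ`
exhausting the space and radii `rₙ > 0` such that all balls of the same radius
`r' < rₙ` centered in `Mₙ` have the same measure. -/
def IsUniformMeasure {M : Type*} [MetricSpace M] [MeasurableSpace M] (μ : Measure M) :
    Prop :=
  ∃ (Ms : ℕ → Set M) (r : ℕ → ℝ),
    (∀ n, IsOpen (Ms n)) ∧ Monotone Ms ∧ (⋃ n, Ms n) = Set.univ ∧ (∀ n, 0 < r n) ∧
    ∀ n, ∀ x ∈ Ms n, ∀ y ∈ Ms n, ∀ r' : ℝ, 0 < r' → r' < r n →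
      μ (Metric.ball x r') = μ (Metric.ball y r')

open Filter Topology Metric Set

section

variable {M : Type*} [MetricSpace M]

theorem IsCompact.eventually_forall_ball_subset {F U : Set M} (hF : IsCompact F)
    (hU : IsOpen U) (hFU : F ⊆ U) : ∀ᶠ r in 𝓝[>] (0 : ℝ), ∀ x ∈ F, ball x r ⊆ U := by
  obtain ⟨δ, hδ, hδU⟩ := hF.exists_thickening_subset_open hU hFU
  filter_upwards [Ioo_mem_nhdsGT hδ] with r hr x hx
  exact (ball_subset_thickening hx r).trans ((thickening_mono hr.2.le F).trans hδU)

variable [MeasurableSpace M]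

theorem IsUniformMeasure.eventually_measure_ball_eq [CompactSpace M] {μ : Measure M}
    (h : IsUniformMeasure μ) :
    ∀ᶠ r in 𝓝[>] (0 : ℝ), ∀ x y : M, μ (ball x r) = μ (ball y r) := by
  obtain ⟨Ms, rs, hopen, hmono, hcover, hrpos, hball⟩ := h
  obtain ⟨n, hn⟩ : ∃ n, univ ⊆ Ms n :=
    isCompact_univ.elim_directed_cover Ms hopen (hcover ▸ subset_rfl) hmono.directed_le
  filter_upwards [Ioo_mem_nhdsGT (hrpos n)] with r hr x y
  exact hball n x (hn trivial) y (hn trivial) r hr.1 hr.2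

variable [SecondCountableTopology M]

theorem measure_ball_ne_zero_of_forall_measure_ball_eq {μ : Measure M} (hμ : μ ≠ 0) {r : ℝ}
    (hr : 0 < r) (h : ∀ x y : M, μ (ball x r) = μ (ball y r)) (x : M) :
    μ (ball x r) ≠ 0 := by
  refine fun hx ↦ hμ (Measure.measure_univ_eq_zero.mp ?_)
  refine measure_null_of_locally_null univ fun y _ ↦ ⟨ball y r, ?_, (h y x).trans hx⟩
  exact mem_nhdsWithin_of_mem_nhds (ball_mem_nhds y hr)

variable [BorelSpace M]

theorem lintegral_measure_ball_comm (μ ν : Measure M) [SFinite μ] [SFinite ν] (r : ℝ) :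
    ∫⁻ x, ν (ball x r) ∂μ = ∫⁻ y, μ (ball y r) ∂ν := by
  have hS : MeasurableSet {p : M × M | dist p.2 p.1 < r} :=
    measurableSet_lt (by fun_prop) measurable_const
  calc ∫⁻ x, ν (ball x r) ∂μ = μ.prod ν {p | dist p.2 p.1 < r} := (Measure.prod_apply hS).symm
    _ = ∫⁻ y, μ (ball y r) ∂ν := by
      rw [Measure.prod_apply_symm hS]
      congr! with y
      ext x
      exact mem_ball'.symm

theorem mul_measure_le_mul_measure_of_ball_subset (μ ν : Measure M) [SFinite μ] [SFinite ν]
    {F U : Set M} (hF : MeasurableSet F) {r : ℝ} {a b : ENNReal}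
    (hμ : ∀ x, μ (ball x r) = a) (hν : ∀ x, ν (ball x r) = b)
    (hFU : ∀ x ∈ F, ball x r ⊆ U) : b * μ F ≤ a * ν U :=
  calc b * μ F = ∫⁻ x in F, ν.restrict U (ball x r) ∂μ := by
        rw [← setLIntegral_const]
        refine setLIntegral_congr_fun hF fun x hx ↦ ?_
        rw [Measure.restrict_apply measurableSet_ball, inter_eq_self_of_subset_left (hFU x hx),
          hν]
    _ ≤ ∫⁻ x, ν.restrict U (ball x r) ∂μ := setLIntegral_le_lintegral _ _
    _ = ∫⁻ y in U, μ (ball y r) ∂ν := lintegral_measure_ball_comm _ _ r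
    _ = a * ν U := by simp only [hμ, lintegral_const, Measure.restrict_apply_univ]

theorem measure_mul_measure_univ_le_of_ball_subset (μ ν : Measure M) [SFinite μ] [SFinite ν]
    {F U : Set M} (hF : MeasurableSet F) {r : ℝ} {a b : ENNReal}
    (hμ : ∀ x, μ (ball x r) = a) (hν : ∀ x, ν (ball x r) = b) (ha₀ : a ≠ 0) (ha : a ≠ ⊤)
    (hFU : ∀ x ∈ F, ball x r ⊆ U) : ν F * μ univ ≤ ν univ * μ U := by
  rw [← ENNReal.mul_le_mul_iff_right ha₀ ha]
  calc a * (ν F * μ univ) = a * ν F * μ univ := (mul_assoc _ _ _).symm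
    _ ≤ b * μ U * μ univ :=
      mul_le_mul_left (mul_measure_le_mul_measure_of_ball_subset ν μ hF hν hμ hFU) _
    _ = b * μ univ * μ U := by ring
    _ ≤ a * ν univ * μ U := mul_le_mul_left
      (mul_measure_le_mul_measure_of_ball_subset μ ν .univ hμ hν fun _ _ ↦ subset_univ _) _
    _ = a * (ν univ * μ U) := mul_assoc _ _ _

variable [CompactSpace M]

theorem IsUniformMeasure.measure_mul_measure_univ_le {μ ν : Measure M} [IsFiniteMeasure μ]
    [IsFiniteMeasure ν] (hμ : IsUniformMeasure μ) (hν : IsUniformMeasure ν) {U : Set M}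
    (hU : IsOpen U) : ν U * μ univ ≤ ν univ * μ U := by
  rcases eq_or_ne μ 0 with rfl | hμ₀
  · simp
  have : NeZero μ := ⟨hμ₀⟩
  obtain ⟨x₀⟩ := μ.nonempty_of_neZero
  rw [hU.measure_eq_iSup_isClosed ν]
  simp only [ENNReal.iSup_mul]
  refine iSup_le fun F ↦ iSup_le fun hFU ↦ iSup_le fun hF ↦ ?_
  obtain ⟨r, ⟨hμr, hνr, hFr⟩, hr⟩ := ((hμ.eventually_measure_ball_eq.and
    (hν.eventually_measure_ball_eq.and
      (hF.isCompact.eventually_forall_ball_subset hU hFU))).and self_mem_nhdsWithin).exists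
  exact measure_mul_measure_univ_le_of_ball_subset μ ν hF.measurableSet (fun x ↦ hμr x x₀)
    (fun x ↦ hνr x x₀) (measure_ball_ne_zero_of_forall_measure_ball_eq hμ₀ hr hμr x₀)
    (measure_ne_top μ _) hFr

theorem IsUniformMeasure.measure_univ_smul_eq {μ ν : Measure M} [IsFiniteMeasure μ]
    [IsFiniteMeasure ν] (hμ : IsUniformMeasure μ) (hν : IsUniformMeasure ν) :
    μ univ • ν = ν univ • μ := by
  have := ν.smul_finite (measure_ne_top μ univ)
  refine ext_of_generate_finite _ BorelSpace.measurable_eq isPiSystem_isOpen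
    (fun U hU ↦ ?_) ?_
  · simp only [Measure.smul_apply, smul_eq_mul]
    rw [mul_comm]
    refine le_antisymm (hμ.measure_mul_measure_univ_le hν hU) ?_
    rw [mul_comm, mul_comm (ν U)]
    exact hν.measure_mul_measure_univ_le hμ hU
  · simp only [Measure.smul_apply, smul_eq_mul, mul_comm]

end

/-- Christensen's theorem: two finite uniform Borel measures on a compact metric space
are proportional; in particular two uniform probability measures coincide. -/
theorem uniform_measures_proportional {M : Type*} [MetricSpace M] [CompactSpace M]
    [MeasurableSpace M] [BorelSpace M] (P P' : Measure M)
    [IsFiniteMeasure P] [IsFiniteMeasure P'] (hP : P ≠ 0)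
    (hPu : IsUniformMeasure P) (hP'u : IsUniformMeasure P') :
    (∃ l : ENNReal, P' = l • P) ∧
    (IsProbabilityMeasure P → IsProbabilityMeasure P' → P' = P) := by
  have key := hPu.measure_univ_smul_eq hP'u
  refine ⟨⟨(P univ)⁻¹ * P' univ, ?_⟩, fun _ _ ↦ by simpa using key⟩
  rw [← smul_smul, ← key, smul_smul, ENNReal.inv_mul_cancel (by simpa using hP)
    (measure_ne_top P univ), one_smul]
end
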